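/- Let g solve g'' + τ g < 0 on (r₀, R) with g(r₀) = 0, g'(R) = 0, g < 0 on (r₀,R), and τ > 0. Then τ > π²/(4(R − r₀)²). -/

import Mathlib

/-!
Sturm comparison with `s(r) = sin(√τ (r - r₀))`, which solves `s'' + τ s = 0`. If `τ` were at most
`π²/(4(R - r₀)²)`, then `s > 0` on `(r₀, R)` and `s' ≥ 0` at `R`. The Wronskian `W = s g' - s' g`
has `W' = s (g'' + τ g) < 0`, so `W(R) < W(r₀) = 0`, whereas `g'(R) = 0` and `g(R) ≤ 0` give
`W(R) = -s'(R) g(R) ≥ 0`.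
-/

open Real Set

noncomputable def wronskian (f g : ℝ → ℝ) (x : ℝ) : ℝ :=
  f x * deriv g x - deriv f x * g x

section Wronskian

variable {f g : ℝ → ℝ}

theorem hasDerivAt_wronskian (hf : ContDiff ℝ 2 f) (hg : ContDiff ℝ 2 g) (x : ℝ) :
    HasDerivAt (wronskian f g) (f x * deriv (deriv g) x - deriv (deriv f) x * g x) x := by
  have hf' := (hf.differentiable_deriv_two x).hasDerivAt
  have hg' := (hg.differentiable_deriv_two x).hasDerivAt
  have hf₁ := (hf.differentiable two_ne_zero x).hasDerivAt
  have hg₁ := (hg.differentiable two_ne_zero x).hasDerivAt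
  exact ((hf₁.mul hg').sub (hf'.mul hg₁)).congr_deriv (by ring)

theorem strictAntiOn_wronskian {q : ℝ → ℝ} {a b : ℝ} (hf : ContDiff ℝ 2 f)
    (hg : ContDiff ℝ 2 g) (hf_eq : ∀ x ∈ Ioo a b, deriv (deriv f) x + q x * f x = 0)
    (hf_pos : ∀ x ∈ Ioo a b, 0 < f x)
    (hg_lt : ∀ x ∈ Ioo a b, deriv (deriv g) x + q x * g x < 0) :
    StrictAntiOn (wronskian f g) (Icc a b) := by
  refine strictAntiOn_of_deriv_neg (convex_Icc a b)
    (fun x _ ↦ (hasDerivAt_wronskian hf hg x).continuousAt.continuousWithinAt) fun x hx ↦ ?_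
  rw [interior_Icc] at hx
  have hW' : f x * deriv (deriv g) x - deriv (deriv f) x * g x
      = f x * (deriv (deriv g) x + q x * g x) := by
    linear_combination (-g x) * hf_eq x hx
  rw [(hasDerivAt_wronskian hf hg x).deriv, hW']
  exact mul_neg_of_pos_of_neg (hf_pos x hx) (hg_lt x hx)

end Wronskian

section SineSolution

variable (ω a : ℝ)

theorem hasDerivAt_sin_mul_sub (x : ℝ) :
    HasDerivAt (fun x ↦ sin (ω * (x - a))) (ω * cos (ω * (x - a))) x :=
  ((hasDerivAt_sin _).comp x (((hasDerivAt_id x).sub_const a).const_mul ω)).congr_deriv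
    (by simp only [id]; ring)

theorem deriv_sin_mul_sub : deriv (fun x ↦ sin (ω * (x - a))) = fun x ↦ ω * cos (ω * (x - a)) :=
  funext fun x ↦ (hasDerivAt_sin_mul_sub ω a x).deriv

theorem deriv_deriv_sin_mul_sub (x : ℝ) :
    deriv (deriv fun x ↦ sin (ω * (x - a))) x = -ω ^ 2 * sin (ω * (x - a)) := by
  have h : HasDerivAt (fun x ↦ ω * cos (ω * (x - a))) (-ω ^ 2 * sin (ω * (x - a))) x :=
    (((hasDerivAt_cos _).comp x (((hasDerivAt_id x).sub_const a).const_mul ω)).const_mul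
      ω).congr_deriv (by simp only [mul_one, id]; ring)
  rw [deriv_sin_mul_sub, h.deriv]

theorem contDiff_sin_mul_sub : ContDiff ℝ 2 fun x ↦ sin (ω * (x - a)) := by
  fun_prop

end SineSolution

theorem mul_le_pi_div_two_of_le {τ L : ℝ} (hτ : 0 ≤ τ) (hL : 0 < L)
    (h : τ ≤ π ^ 2 / (4 * L ^ 2)) : √τ * L ≤ π / 2 := by
  have hsq : (√τ * L) ^ 2 ≤ (π / 2) ^ 2 := by
    rw [mul_pow, sq_sqrt hτ]
    rw [le_div_iff₀ (by positivity)] at h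
    linarith
  exact (pow_le_pow_iff_left₀ (by positivity) (by positivity) two_ne_zero).1 hsq

theorem tau_gt_pi_sq (r₀ R τ : ℝ) (hrR : r₀ < R) (hτ : 0 < τ) (g : ℝ → ℝ)
    (hg : ContDiff ℝ 2 g)
    (hg0 : g r₀ = 0) (hgR : deriv g R = 0)
    (hg_neg : ∀ r ∈ Ioo r₀ R, g r < 0)
    (hg_ineq : ∀ r ∈ Ioo r₀ R, deriv (deriv g) r + τ * g r < 0) :
    Real.pi ^ 2 / (4 * (R - r₀) ^ 2) < τ := by
  by_contra! hτ_le
  set ω := √τ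
  set s : ℝ → ℝ := fun x ↦ sin (ω * (x - r₀))
  have hωL : ω * (R - r₀) ≤ π / 2 := mul_le_pi_div_two_of_le hτ.le (sub_pos.2 hrR) hτ_le
  have hω : 0 < ω := sqrt_pos.2 hτ
  have hs_pos : ∀ x ∈ Ioo r₀ R, 0 < s x := fun x hx ↦ sin_pos_of_pos_of_lt_pi
    (mul_pos hω (sub_pos.2 hx.1)) (by nlinarith [hx.2, pi_pos])
  have hs_eq : ∀ x ∈ Ioo r₀ R, deriv (deriv s) x + τ * s x = 0 := fun x _ ↦ by
    rw [deriv_deriv_sin_mul_sub, sq_sqrt hτ.le]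
    ring
  have hW_lt : wronskian s g R < wronskian s g r₀ :=
    strictAntiOn_wronskian (contDiff_sin_mul_sub ω r₀) hg hs_eq hs_pos hg_ineq
      (left_mem_Icc.2 hrR.le) (right_mem_Icc.2 hrR.le) hrR
  have hgR_nonpos : g R ≤ 0 := by
    have : Icc r₀ R ⊆ {x | g x ≤ 0} := by
      rw [← closure_Ioo hrR.ne]
      exact (isClosed_le hg.continuous continuous_const).closure_subset_iff.2
        fun x hx ↦ (hg_neg x hx).le
    exact this (right_mem_Icc.2 hrR.le)
  have hcos : 0 ≤ cos (ω * (R - r₀)) :=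
    cos_nonneg_of_mem_Icc ⟨by linarith [pi_pos, mul_pos hω (sub_pos.2 hrR)], hωL⟩
  have hW_r₀ : wronskian s g r₀ = 0 := by simp [wronskian, s, hg0]
  have hW_R : 0 ≤ wronskian s g R := by
    simp only [wronskian, s, deriv_sin_mul_sub, hgR, mul_zero, zero_sub]
    exact neg_nonneg.2 (mul_nonpos_of_nonneg_of_nonpos (mul_nonneg hω.le hcos) hgR_nonpos)
  linarith
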